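/- Every ideal of the Tate algebra K{X;r}, and every ideal of the integral Tate algebra K{X;r}°, admits a finite Gröbner basis. -/

import Mathlib

open MvPowerSeries

noncomputable section

/-- A normalized discrete valuation on a field `K`, complete with respect to
the associated distance. -/
structure IsCDVField {K : Type*} [Field K] (val : K → WithTop ℤ) : Prop where
  eq_top_iff : ∀ x : K, val x = ⊤ ↔ x = 0
  map_one : val 1 = 0
  map_mul : ∀ x y : K, val (x * y) = val x + val y
  min_le_val_add : ∀ x y : K, min (val x) (val y) ≤ val (x + y)
  surjective : ∀ m : ℤ, ∃ x : K, val x = (m : WithTop ℤ)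
  complete : ∀ u : ℕ → K,
      (∀ M : ℤ, ∃ N : ℕ, ∀ p, N ≤ p → ∀ q, N ≤ q → (M : WithTop ℤ) ≤ val (u p - u q)) →
      ∃ l : K, ∀ M : ℤ, ∃ N : ℕ, ∀ p, N ≤ p → (M : WithTop ℤ) ≤ val (u p - l)

/-- A monomial order: a well-order compatible with addition. -/
structure IsMonomialOrder {M : Type*} [AddCommMonoid M] (mo : M → M → Prop) : Prop where
  refl : ∀ i, mo i i
  trans : ∀ i j k, mo i j → mo j k → mo i k
  antisymm : ∀ i j, mo i j → mo j i → i = j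
  total : ∀ i j, mo i j ∨ mo j i
  add_right : ∀ i j k, mo i j → mo (i + k) (j + k)
  wf : WellFounded fun i j => mo i j ∧ i ≠ j

variable {K : Type*} [Field K] {n : ℕ}

/-- The valuation of `K`, with values in `WithTop ℚ`. -/
def valQ (val : K → WithTop ℤ) (a : K) : WithTop ℚ :=
  WithTop.map (fun m : ℤ => (m : ℚ)) (val a)

/-- The dot product `r·i`. -/
def wt (r : Fin n → ℚ) (i : Fin n →₀ ℕ) : ℚ :=
  ∑ j, r j * (i j : ℚ)

/-- `val_r` of the term `a·X^i`, namely `val a - r·i`. -/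
def tval (val : K → WithTop ℤ) (r : Fin n → ℚ) (a : K) (i : Fin n →₀ ℕ) : WithTop ℚ :=
  valQ val a + ((-wt r i : ℚ) : WithTop ℚ)

/-- `val_r` of the coefficient term of `f` at exponent `i`. -/
def cval (val : K → WithTop ℤ) (r : Fin n → ℚ) (f : MvPowerSeries (Fin n) K)
    (i : Fin n →₀ ℕ) : WithTop ℚ :=
  tval val r (MvPowerSeries.coeff (R := K) i f) i

/-- Membership in the Tate algebra `K{X; r}`: the coefficient valuations
`val(a_i) - r·i` tend to `+∞`, i.e. for each `C` only finitely many of them are `< C`. -/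
def IsTate (val : K → WithTop ℤ) (r : Fin n → ℚ) (f : MvPowerSeries (Fin n) K) : Prop :=
  ∀ C : ℚ, {i : Fin n →₀ ℕ | cval val r f i < (C : WithTop ℚ)}.Finite

/-- The Tate algebra `K{X; r}`, as a subset of the ring of power series. -/
def TateSet (val : K → WithTop ℤ) (r : Fin n → ℚ) : Set (MvPowerSeries (Fin n) K) :=
  {f | IsTate val r f}

/-- The integral Tate algebra `K{X; r}°` (Tate series of nonnegative Gauss valuation). -/
def TateIntSet (val : K → WithTop ℤ) (r : Fin n → ℚ) : Set (MvPowerSeries (Fin n) K) :=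
  {f | IsTate val r f ∧ ∀ i, (0 : WithTop ℚ) ≤ cval val r f i}

/-- The Gauss valuation of `f` equals `v`. -/
def GaussValEq (val : K → WithTop ℤ) (r : Fin n → ℚ) (f : MvPowerSeries (Fin n) K)
    (v : ℚ) : Prop :=
  (∀ i, (v : WithTop ℚ) ≤ cval val r f i) ∧ ∃ i, cval val r f i = (v : WithTop ℚ)

/-- `J` is an ideal of the subring `A` of the power series ring. -/
structure IsIdealOf (A J : Set (MvPowerSeries (Fin n) K)) : Prop where
  subset : J ⊆ A
  zero_mem : (0 : MvPowerSeries (Fin n) K) ∈ J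
  add_mem : ∀ f ∈ J, ∀ g ∈ J, f + g ∈ J
  neg_mem : ∀ f ∈ J, -f ∈ J
  smul_mem : ∀ a ∈ A, ∀ f ∈ J, a * f ∈ J

/-- `a·X^i < b·X^j` for the term order attached to `val`, `r` and the monomial order `mo`. -/
def TermLt (val : K → WithTop ℤ) (r : Fin n → ℚ) (mo : (Fin n →₀ ℕ) → (Fin n →₀ ℕ) → Prop)
    (a : K) (i : Fin n →₀ ℕ) (b : K) (j : Fin n →₀ ℕ) : Prop :=
  tval val r b j < tval val r a i ∨ (tval val r a i = tval val r b j ∧ i ≠ j ∧ mo i j)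

/-- `a·X^i ≤ b·X^j` for the term order. -/
def TermLe (val : K → WithTop ℤ) (r : Fin n → ℚ) (mo : (Fin n →₀ ℕ) → (Fin n →₀ ℕ) → Prop)
    (a : K) (i : Fin n →₀ ℕ) (b : K) (j : Fin n →₀ ℕ) : Prop :=
  tval val r b j < tval val r a i ∨ (tval val r a i = tval val r b j ∧ mo i j)

/-- `a·X^i` is the leading term of `f`. -/
def IsLeadingTerm (val : K → WithTop ℤ) (r : Fin n → ℚ)
    (mo : (Fin n →₀ ℕ) → (Fin n →₀ ℕ) → Prop)
    (f : MvPowerSeries (Fin n) K) (a : K) (i : Fin n →₀ ℕ) : Prop :=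
  MvPowerSeries.coeff (R := K) i f = a ∧ a ≠ 0 ∧
    ∀ j, MvPowerSeries.coeff (R := K) j f ≠ 0 → j ≠ i →
      TermLt val r mo (MvPowerSeries.coeff (R := K) j f) j a i

/-- `a·X^i` divides `b·X^j` in the monoid of terms `T(r)`. -/
def TDiv (a : K) (i : Fin n →₀ ℕ) (b : K) (j : Fin n →₀ ℕ) : Prop :=
  a ≠ 0 ∧ b ≠ 0 ∧ ∃ k, j = i + k

/-- `a·X^i` divides `b·X^j` in the monoid of integral terms `T°(r)`. -/
def TIntDiv (val : K → WithTop ℤ) (r : Fin n → ℚ) (a : K) (i : Fin n →₀ ℕ)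
    (b : K) (j : Fin n →₀ ℕ) : Prop :=
  a ≠ 0 ∧ b ≠ 0 ∧ ∃ k, j = i + k ∧ (0 : WithTop ℚ) ≤ tval val r (b * a⁻¹) k

/-- `g` is a Gröbner basis of `J`, as an ideal of `K{X;r}`. -/
def IsGB (val : K → WithTop ℤ) (r : Fin n → ℚ) (mo : (Fin n →₀ ℕ) → (Fin n →₀ ℕ) → Prop)
    (J : Set (MvPowerSeries (Fin n) K)) {s : ℕ} (g : Fin s → MvPowerSeries (Fin n) K) : Prop :=
  (∀ k, g k ∈ J ∧ g k ≠ 0) ∧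
    ∀ f ∈ J, ∀ a i, IsLeadingTerm val r mo f a i →
      ∃ k b j, IsLeadingTerm val r mo (g k) b j ∧ TDiv b j a i

/-- `g` is a Gröbner basis of `J`, as an ideal of `K{X;r}°`. -/
def IsGBInt (val : K → WithTop ℤ) (r : Fin n → ℚ) (mo : (Fin n →₀ ℕ) → (Fin n →₀ ℕ) → Prop)
    (J : Set (MvPowerSeries (Fin n) K)) {s : ℕ} (g : Fin s → MvPowerSeries (Fin n) K) : Prop :=
  (∀ k, g k ∈ J ∧ g k ≠ 0) ∧
    ∀ f ∈ J, ∀ a i, IsLeadingTerm val r mo f a i →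
      ∃ k b j, IsLeadingTerm val r mo (g k) b j ∧ TIntDiv val r b j a i

/-- The set `LT(J)` of leading terms of nonzero elements of `J`. -/
def LTSet (val : K → WithTop ℤ) (r : Fin n → ℚ) (mo : (Fin n →₀ ℕ) → (Fin n →₀ ℕ) → Prop)
    (J : Set (MvPowerSeries (Fin n) K)) : Set (K × (Fin n →₀ ℕ)) :=
  {t | ∃ f ∈ J, IsLeadingTerm val r mo f t.1 t.2}

/-- Exponents of elements of `LT(J)`: the image of `LT(J)` modulo units of `K`. -/
def LTExpSet (val : K → WithTop ℤ) (r : Fin n → ℚ) (mo : (Fin n →₀ ℕ) → (Fin n →₀ ℕ) → Prop)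
    (J : Set (MvPowerSeries (Fin n) K)) : Set (Fin n →₀ ℕ) :=
  {i | ∃ a, (a, i) ∈ LTSet val r mo J}

/-- The skeleton of `LT(J)` (modulo units of `K`): minimal elements for divisibility. -/
def SkelExp (val : K → WithTop ℤ) (r : Fin n → ℚ) (mo : (Fin n →₀ ℕ) → (Fin n →₀ ℕ) → Prop)
    (J : Set (MvPowerSeries (Fin n) K)) : Set (Fin n →₀ ℕ) :=
  {i | i ∈ LTExpSet val r mo J ∧ ∀ j ∈ LTExpSet val r mo J, (∃ k, i = j + k) → j = i}

/-- The image of `LT(J)` modulo units of `K°`: pairs (exponent, valuation of the term). -/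
def LTClassSet (val : K → WithTop ℤ) (r : Fin n → ℚ) (mo : (Fin n →₀ ℕ) → (Fin n →₀ ℕ) → Prop)
    (J : Set (MvPowerSeries (Fin n) K)) : Set ((Fin n →₀ ℕ) × ℚ) :=
  {c | ∃ a, (a, c.1) ∈ LTSet val r mo J ∧ tval val r a c.1 = (c.2 : WithTop ℚ)}

/-- Divisibility of classes of integral terms modulo units of `K°`. -/
def ClassDiv {n : ℕ} (c d : (Fin n →₀ ℕ) × ℚ) : Prop :=
  (∃ k, d.1 = c.1 + k) ∧ c.2 ≤ d.2

/-- The skeleton of `LT(J)` modulo units of `K°`. -/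
def SkelClass (val : K → WithTop ℤ) (r : Fin n → ℚ) (mo : (Fin n →₀ ℕ) → (Fin n →₀ ℕ) → Prop)
    (J : Set (MvPowerSeries (Fin n) K)) : Set ((Fin n →₀ ℕ) × ℚ) :=
  {c | c ∈ LTClassSet val r mo J ∧ ∀ d ∈ LTClassSet val r mo J, ClassDiv d c → d = c}

/-- Minimal Gröbner basis of an ideal of `K{X;r}`: the classes of the leading terms
modulo units of `K` are pairwise distinct and are exactly the skeleton of `LT(J)`. -/
def IsMinGB (val : K → WithTop ℤ) (r : Fin n → ℚ) (mo : (Fin n →₀ ℕ) → (Fin n →₀ ℕ) → Prop)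
    (J : Set (MvPowerSeries (Fin n) K)) {s : ℕ} (g : Fin s → MvPowerSeries (Fin n) K) : Prop :=
  IsGB val r mo J g ∧ ∃ e : Fin s → (Fin n →₀ ℕ),
    (∀ k, ∃ a, IsLeadingTerm val r mo (g k) a (e k)) ∧
    Function.Injective e ∧ Set.range e = SkelExp val r mo J

/-- Minimal Gröbner basis of an ideal of `K{X;r}°`. -/
def IsMinGBInt (val : K → WithTop ℤ) (r : Fin n → ℚ) (mo : (Fin n →₀ ℕ) → (Fin n →₀ ℕ) → Prop)
    (J : Set (MvPowerSeries (Fin n) K)) {s : ℕ} (g : Fin s → MvPowerSeries (Fin n) K) : Prop :=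
  IsGBInt val r mo J g ∧ ∃ e : Fin s → ((Fin n →₀ ℕ) × ℚ),
    (∀ k, ∃ a, IsLeadingTerm val r mo (g k) a (e k).1 ∧
      tval val r a (e k).1 = ((e k).2 : WithTop ℚ)) ∧
    Function.Injective e ∧ Set.range e = SkelClass val r mo J

/-- The leading term of `f` (via choice). -/
def leadTerm (val : K → WithTop ℤ) (r : Fin n → ℚ) (mo : (Fin n →₀ ℕ) → (Fin n →₀ ℕ) → Prop)
    (f : MvPowerSeries (Fin n) K) : K × (Fin n →₀ ℕ) :=
  Classical.epsilon fun p => IsLeadingTerm val r mo f p.1 p.2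

/-- Multiplication of a power series by the term `t`. -/
def termMul (t : K × (Fin n →₀ ℕ)) (f : MvPowerSeries (Fin n) K) : MvPowerSeries (Fin n) K :=
  (MvPowerSeries.monomial (R := K) t.2 t.1) * f

/-- The S-polynomial `S(f, g) = (LT(g)/gcd(LT f, LT g))·f - (LT(f)/gcd(LT f, LT g))·g`. -/
def Spoly (val : K → WithTop ℤ) (π : K) (r : Fin n → ℚ)
    (mo : (Fin n →₀ ℕ) → (Fin n →₀ ℕ) → Prop)
    (f g : MvPowerSeries (Fin n) K) : MvPowerSeries (Fin n) K :=
  let a := (leadTerm val r mo f).1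
  let i := (leadTerm val r mo f).2
  let b := (leadTerm val r mo g).1
  let j := (leadTerm val r mo g).2
  let m : ℤ := min ((val a).untopD 0) ((val b).untopD 0)
  termMul (b * π ^ (-m), j - i) f - termMul (a * π ^ (-m), i - j) g

/-- `f` reduces to zero modulo the family `g` with quotients in `A`. -/
def ReducesToZero (val : K → WithTop ℤ) (r : Fin n → ℚ)
    (mo : (Fin n →₀ ℕ) → (Fin n →₀ ℕ) → Prop) (A : Set (MvPowerSeries (Fin n) K))
    {s : ℕ} (g : Fin s → MvPowerSeries (Fin n) K) (f : MvPowerSeries (Fin n) K) : Prop :=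
  f = 0 ∨ ∃ q : Fin s → MvPowerSeries (Fin n) K, (∀ k, q k ∈ A) ∧ f = ∑ k, q k * g k ∧
    ∀ k i, MvPowerSeries.coeff (R := K) i (q k) ≠ 0 →
      ∀ b j, IsLeadingTerm val r mo (g k) b j →
      ∀ a₀ i₀, IsLeadingTerm val r mo f a₀ i₀ →
        TermLe val r mo (MvPowerSeries.coeff (R := K) i (q k) * b) (i + j) a₀ i₀

/-! Both statements come from Dickson's lemma. Sort each leading term `a·X^i` into a class: its
exponent `i` for `K{X;r}`, the pair `(i, val_r(a·X^i))` for `K{X;r}°`, so that a smaller class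
divides a larger one. Exponents are partially well ordered componentwise, and so are the pairs,
because `val_r` of an integral term is a nonnegative element of `(1/D)ℤ`, `D` a common denominator
of `r`. Series realising the finitely many minimal classes form a Gröbner basis. -/

theorem Set.IsPWO.exists_finset_image_le {ι α : Type*} [PartialOrder α] {s : Set ι}
    {f : ι → α} (hs : (f '' s).IsPWO) :
    ∃ t : Finset ι, ↑t ⊆ s ∧ ∀ x ∈ s, ∃ y ∈ t, f y ≤ f x := by
  classical
  set M := {y | Minimal (· ∈ f '' s) y}
  have hMfin : M.Finite :=
    (setOfPred_minimal_antichain _).finite_of_partiallyWellOrderedOn (hs.mono fun _ hy => hy.1)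
  obtain ⟨t, hts, htM⟩ :=
    Finset.subset_set_image_iff.mp (show ↑hMfin.toFinset ⊆ f '' s from fun _ hy =>
      (hMfin.mem_toFinset.mp hy).1)
  refine ⟨t, hts, fun x hx => ?_⟩
  obtain ⟨y, hyx, hyM⟩ := hs.exists_le_minimal (Set.mem_image_of_mem f hx)
  obtain ⟨z, hzt, rfl⟩ := Finset.mem_image.mp (htM ▸ hMfin.mem_toFinset.mpr hyM)
  exact ⟨z, hzt, hyx⟩

section LeadingTerms

variable {val : K → WithTop ℤ} {r : Fin n → ℚ} {mo : (Fin n →₀ ℕ) → (Fin n →₀ ℕ) → Prop}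

theorem IsLeadingTerm.ne_zero {f : MvPowerSeries (Fin n) K} {a : K} {i : Fin n →₀ ℕ}
    (h : IsLeadingTerm val r mo f a i) : f ≠ 0 := by
  rintro rfl
  exact h.2.1 (by rw [← h.1, map_zero])

theorem exists_fin_leadingTerm_dvd_of_isPWO {β : Type*} [PartialOrder β]
    {J : Set (MvPowerSeries (Fin n) K)} (cls : K × (Fin n →₀ ℕ) → β)
    (hcls : (cls '' LTSet val r mo J).IsPWO)
    (Dvd : K → (Fin n →₀ ℕ) → K → (Fin n →₀ ℕ) → Prop)
    (hdvd : ∀ t ∈ LTSet val r mo J, ∀ u ∈ LTSet val r mo J, cls t ≤ cls u →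
      Dvd t.1 t.2 u.1 u.2) :
    ∃ (s : ℕ) (g : Fin s → MvPowerSeries (Fin n) K), (∀ k, g k ∈ J ∧ g k ≠ 0) ∧
      ∀ f ∈ J, ∀ a i, IsLeadingTerm val r mo f a i →
        ∃ k b j, IsLeadingTerm val r mo (g k) b j ∧ Dvd b j a i := by
  obtain ⟨T, hTLT, hTle⟩ := hcls.exists_finset_image_le
  have hT : ∀ t : T, ∃ f ∈ J, IsLeadingTerm val r mo f t.1.1 t.1.2 := fun t => hTLT t.2
  choose g hgJ hgLT using hT
  refine ⟨T.card, fun k => g (T.equivFin.symm k), fun k => ⟨hgJ _, (hgLT _).ne_zero⟩, ?_⟩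
  intro f hf a i hfLT
  obtain ⟨t, htT, hle⟩ := hTle (a, i) ⟨f, hf, hfLT⟩
  refine ⟨T.equivFin ⟨t, htT⟩, t.1, t.2, ?_, hdvd t (hTLT htT) (a, i) ⟨f, hf, hfLT⟩ hle⟩
  simpa using hgLT ⟨t, htT⟩

end LeadingTerms

theorem TDiv.of_le {a b : K} {i j : Fin n →₀ ℕ} (hb : b ≠ 0) (ha : a ≠ 0) (hji : j ≤ i) :
    TDiv b j a i :=
  ⟨hb, ha, le_iff_exists_add.mp hji⟩

theorem wt_add (r : Fin n → ℚ) (i j : Fin n →₀ ℕ) : wt r (i + j) = wt r i + wt r j := by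
  simp only [wt, Finsupp.add_apply, Nat.cast_add, mul_add, Finset.sum_add_distrib]

theorem exists_int_eq_prod_den_mul_wt (r : Fin n → ℚ) (i : Fin n →₀ ℕ) :
    ∃ w : ℤ, (w : ℚ) = (∏ j, (r j).den : ℕ) * wt r i := by
  have hr : ∀ j, ∃ w : ℤ, (w : ℚ) = (∏ j, (r j).den : ℕ) * r j := by
    intro j
    obtain ⟨c, hc⟩ := Finset.dvd_prod_of_mem (fun j => (r j).den) (Finset.mem_univ j)
    refine ⟨c * (r j).num, ?_⟩
    rw [hc, Nat.cast_mul, mul_comm ((r j).den : ℚ), mul_assoc, Rat.den_mul_eq_num]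
    push_cast
    ring
  choose w hw using hr
  refine ⟨∑ j, w j * i j, ?_⟩
  simp only [wt, Finset.mul_sum, Int.cast_sum, Int.cast_mul, hw, Int.cast_natCast, mul_assoc]

section Valuation

variable {val : K → WithTop ℤ} (r : Fin n → ℚ)

theorem tval_ne_top (hval : ∀ x : K, val x = ⊤ ↔ x = 0) {a : K} (ha : a ≠ 0)
    (i : Fin n →₀ ℕ) : tval val r a i ≠ ⊤ := by
  simp [tval, valQ, WithTop.map_eq_top_iff, hval, ha]

theorem tval_mul (hmul : ∀ x y : K, val (x * y) = val x + val y) (x y : K)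
    (i j : Fin n →₀ ℕ) : tval val r (x * y) (i + j) = tval val r x i + tval val r y j := by
  simp only [tval, valQ, hmul, wt_add]
  cases val x <;> cases val y <;> simp only [WithTop.map_top, WithTop.map_coe, ← WithTop.coe_add,
    WithTop.top_add, WithTop.add_top]
  congr 1
  push_cast
  ring

theorem exists_nat_tval_eq_div (hval : ∀ x : K, val x = ⊤ ↔ x = 0) {a : K} (ha : a ≠ 0)
    {i : Fin n →₀ ℕ} (h0 : 0 ≤ tval val r a i) :
    ∃ m : ℕ, tval val r a i = (((m : ℚ) / (∏ j, (r j).den : ℕ) : ℚ) : WithTop ℚ) := by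
  set D : ℕ := ∏ j, (r j).den
  have hD : (D : ℚ) ≠ 0 := by
    exact_mod_cast Finset.prod_ne_zero_iff.mpr fun j _ => (r j).den_nz
  obtain ⟨z, hz⟩ := WithTop.ne_top_iff_exists.mp fun h => ha ((hval a).mp h)
  obtain ⟨w, hw⟩ := exists_int_eq_prod_den_mul_wt r i
  have htval : tval val r a i = ((((D * z - w : ℤ) : ℚ) / D : ℚ) : WithTop ℚ) := by
    rw [tval, valQ, ← hz, WithTop.map_coe, ← WithTop.coe_add]
    congr 1
    field_simp
    push_cast
    rw [hw]
    ring
  have hnonneg : 0 ≤ D * z - w := by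
    rw [htval] at h0
    have : (0 : ℚ) ≤ ((D * z - w : ℤ) : ℚ) / D := by exact_mod_cast h0
    rw [le_div_iff₀ (by positivity), zero_mul] at this
    exact_mod_cast this
  lift D * z - w to ℕ using hnonneg with m
  exact ⟨m, by exact_mod_cast htval⟩

theorem TIntDiv.of_le (hval : IsCDVField val) {a b : K} {i j : Fin n →₀ ℕ} (hb : b ≠ 0)
    (ha : a ≠ 0) (hji : j ≤ i) (hle : tval val r b j ≤ tval val r a i) :
    TIntDiv val r b j a i := by
  obtain ⟨k, rfl⟩ := le_iff_exists_add.mp hji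
  refine ⟨hb, ha, k, rfl, ?_⟩
  have hsplit : tval val r a (j + k) = tval val r (a * b⁻¹) k + tval val r b j := by
    rw [← tval_mul r hval.map_mul, inv_mul_cancel_right₀ hb, add_comm]
  rw [hsplit] at hle
  exact (WithTop.add_le_add_iff_right (tval_ne_top r hval.eq_top_iff hb j)).mp
    ((zero_add _).trans_le hle)

theorem isPWO_image_exponent_tval_of_subset_tateIntSet (hval : IsCDVField val)
    {mo : (Fin n →₀ ℕ) → (Fin n →₀ ℕ) → Prop} {J : Set (MvPowerSeries (Fin n) K)}
    (hJ : J ⊆ TateIntSet val r) :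
    ((fun t : K × (Fin n →₀ ℕ) => (t.2, tval val r t.1 t.2)) '' LTSet val r mo J).IsPWO := by
  set D : ℕ := ∏ j, (r j).den
  have hvals : (fun m : ℕ => (((m : ℚ) / D : ℚ) : WithTop ℚ)) '' Set.univ |>.IsPWO :=
    (Set.isPWO_of_wellQuasiOrderedLE _).image_of_monotone fun _ _ h =>
      WithTop.coe_le_coe.mpr (by gcongr)
  refine ((Set.isPWO_of_wellQuasiOrderedLE Set.univ).prod hvals).mono ?_
  rintro _ ⟨t, ⟨f, hfJ, hLT⟩, rfl⟩
  have h0 : 0 ≤ tval val r t.1 t.2 := hLT.1 ▸ (hJ hfJ).2 t.2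
  obtain ⟨m, hm⟩ := exists_nat_tval_eq_div r hval.eq_top_iff hLT.2.1 h0
  exact ⟨trivial, m, trivial, hm.symm⟩

end Valuation

theorem statement8_general (val : K → WithTop ℤ) (hval : IsCDVField val) (r : Fin n → ℚ)
    (mo : (Fin n →₀ ℕ) → (Fin n →₀ ℕ) → Prop) :
    (∀ J : Set (MvPowerSeries (Fin n) K), IsIdealOf (TateSet val r) J →
      ∃ (s : ℕ) (g : Fin s → MvPowerSeries (Fin n) K), IsGB val r mo J g) ∧
    (∀ J : Set (MvPowerSeries (Fin n) K), IsIdealOf (TateIntSet val r) J →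
      ∃ (s : ℕ) (g : Fin s → MvPowerSeries (Fin n) K), IsGBInt val r mo J g) := by
  constructor
  · intro J _
    refine exists_fin_leadingTerm_dvd_of_isPWO Prod.snd
      (Set.isPWO_of_wellQuasiOrderedLE _) _ ?_
    rintro t ⟨_, _, htLT⟩ u ⟨_, _, huLT⟩ hji
    exact TDiv.of_le htLT.2.1 huLT.2.1 hji
  · intro J hJ
    refine exists_fin_leadingTerm_dvd_of_isPWO _
      (isPWO_image_exponent_tval_of_subset_tateIntSet r hval hJ.subset) _ ?_
    rintro t ⟨_, _, htLT⟩ u ⟨_, _, huLT⟩ ⟨hji, hle⟩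
    exact TIntDiv.of_le r hval htLT.2.1 huLT.2.1 hji hle

/-- every ideal of `K{X;r}` and every ideal of `K{X;r}°` admits a
finite Gröbner basis. -/
theorem statement8 (val : K → WithTop ℤ) (hval : IsCDVField val) (r : Fin n → ℚ)
    (mo : (Fin n →₀ ℕ) → (Fin n →₀ ℕ) → Prop) (hmo : IsMonomialOrder mo) :
    (∀ J : Set (MvPowerSeries (Fin n) K), IsIdealOf (TateSet val r) J →
      ∃ (s : ℕ) (g : Fin s → MvPowerSeries (Fin n) K), IsGB val r mo J g) ∧
    (∀ J : Set (MvPowerSeries (Fin n) K), IsIdealOf (TateIntSet val r) J →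
      ∃ (s : ℕ) (g : Fin s → MvPowerSeries (Fin n) K), IsGBInt val r mo J g) :=
  statement8_general val hval r mo
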